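/- arXiv:1905.09915 — 4 statements merged into one kernel-verified Lean document; each statement's English description precedes it below -/
import Mathlib

section
/- Let h < 0 and define A₂ = [[4h, -2], [10h², -3h]] and H₂ = [[h, 1], [0, h]]. Then A₂ is stable, and A₂ + tH₂ is stable if and only if t ∈ (-1/2, 1) ∪ (8, ∞). In particular, A₂ + 2H₂ is not stable. -/
lemma spec2 (M : Matrix (Fin 2) (Fin 2) ℂ) (μ : ℂ) :
    μ ∈ spectrum ℂ M ↔ (μ - M 0 0) * (μ - M 1 1) - M 0 1 * M 1 0 = 0 := by
  rw [spectrum.mem_iff]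
  rw [Matrix.isUnit_iff_isUnit_det, isUnit_iff_ne_zero, not_ne_iff, Matrix.det_fin_two]
  simp [Matrix.algebraMap_matrix_apply]

lemma quad_iff (T D : ℝ) :
    (∀ μ : ℂ, μ ^ 2 - (T : ℂ) * μ + (D : ℂ) = 0 → μ.re < 0) ↔ T < 0 ∧ 0 < D := by
  constructor
  · intro H
    by_contra hc
    rw [not_and_or, not_lt, not_lt] at hc
    by_cases hd : 4 * D ≤ T ^ 2
    · set s := Real.sqrt (T ^ 2 / 4 - D) with hs
      have hs2 : s ^ 2 = T ^ 2 / 4 - D := Real.sq_sqrt (by linarith)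
      have hs2c : (s : ℂ) ^ 2 = (T : ℂ) ^ 2 / 4 - (D : ℂ) := by
        have := congrArg (fun r : ℝ => (r : ℂ)) hs2; push_cast at this; exact this
      have hroot : ((T / 2 + s : ℝ) : ℂ) ^ 2 - (T : ℂ) * ((T / 2 + s : ℝ) : ℂ) + (D : ℂ) = 0 := by
        push_cast
        linear_combination hs2c
      have := H _ hroot
      rw [Complex.ofReal_re] at this
      have hsnn : 0 ≤ s := Real.sqrt_nonneg _
      rcases hc with hT | hD
      · linarith
      · have : s ^ 2 ≥ T ^ 2 / 4 := by nlinarith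
        nlinarith [sq_abs T, le_abs_self T, neg_abs_le T, abs_nonneg T]
    · push_neg at hd
      have hD : 0 < D := by nlinarith
      have hT : 0 ≤ T := by rcases hc with hT | hD'; exact hT; linarith
      set s := Real.sqrt (D - T ^ 2 / 4) with hs
      have hs2 : s ^ 2 = D - T ^ 2 / 4 := Real.sq_sqrt (by nlinarith)
      have hroot : (⟨T / 2, s⟩ : ℂ) ^ 2 - (T : ℂ) * ⟨T / 2, s⟩ + (D : ℂ) = 0 := by
        rw [Complex.ext_iff]
        constructor <;>
          simp [pow_two, Complex.mul_re, Complex.mul_im, Complex.ofReal_re, Complex.ofReal_im] <;>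
          nlinarith
      have := H _ hroot
      simp at this
      linarith
  · rintro ⟨hT, hD⟩ μ hμ
    have hre := congrArg Complex.re hμ
    have him := congrArg Complex.im hμ
    simp [pow_two, Complex.mul_re, Complex.mul_im] at hre him
    set x := μ.re; set y := μ.im
    by_contra hx
    push_neg at hx
    rcases eq_or_ne y 0 with hy | hy
    · rw [hy] at hre; nlinarith
    · have h0 : y * (x + x - T) = 0 := by linear_combination him
      rcases mul_eq_zero.mp h0 with h' | h'
      · exact absurd h' hy
      · linarith

/-- A real square matrix is stable if all its complex eigenvalues have negative real part. -/
def IsStableMat {n : ℕ} (A : Matrix (Fin n) (Fin n) ℝ) : Prop :=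
  ∀ μ ∈ spectrum ℂ (A.map (fun x => (x : ℂ))), μ.re < 0

theorem stmt3 (h : ℝ) (hh : h < 0)
    (A₂ : Matrix (Fin 2) (Fin 2) ℝ) (hA : A₂ = !![4 * h, -2; 10 * h ^ 2, -3 * h])
    (H₂ : Matrix (Fin 2) (Fin 2) ℝ) (hH : H₂ = !![h, 1; 0, h]) :
    IsStableMat A₂ ∧
    (∀ t : ℝ, IsStableMat (A₂ + t • H₂) ↔ t ∈ Set.Ioo (-(1:ℝ)/2) 1 ∪ Set.Ioi (8:ℝ)) ∧
    ¬ IsStableMat (A₂ + (2:ℝ) • H₂) := by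
  subst hA hH
  have key : ∀ t : ℝ, IsStableMat (!![4 * h, -2; 10 * h ^ 2, -3 * h] + t • !![h, 1; 0, h]) ↔
      (h * (2 * t + 1) < 0 ∧ 0 < h ^ 2 * (t ^ 2 - 9 * t + 8)) := by
    intro t
    have hM : ((!![4 * h, -2; 10 * h ^ 2, -3 * h] + t • !![h, 1; 0, h]).map
        (fun x : ℝ => (x : ℂ))) =
        !![((4 * h + t * h : ℝ) : ℂ), ((-2 + t : ℝ) : ℂ);
           ((10 * h ^ 2 : ℝ) : ℂ), ((-3 * h + t * h : ℝ) : ℂ)] := by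
      ext i j
      fin_cases i <;> fin_cases j <;> simp [Matrix.map_apply]
    have spec : ∀ μ : ℂ, μ ∈ spectrum ℂ ((!![4 * h, -2; 10 * h ^ 2, -3 * h] + t • !![h, 1; 0, h]).map
        (fun x : ℝ => (x : ℂ))) ↔
        μ ^ 2 - ((h * (2 * t + 1) : ℝ) : ℂ) * μ + ((h ^ 2 * (t ^ 2 - 9 * t + 8) : ℝ) : ℂ) = 0 := by
      intro μ
      rw [hM, spec2]
      simp only [Matrix.cons_val', Matrix.cons_val_zero, Matrix.cons_val_one, Matrix.head_cons,
        Matrix.empty_val', Matrix.cons_val_fin_one, Matrix.head_fin_const, Matrix.of_apply]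
      constructor <;> intro hz <;> (push_cast at hz ⊢; linear_combination hz)
    rw [← quad_iff]
    exact ⟨fun H' μ hμ => H' μ ((spec μ).mpr hμ), fun H' μ hμ => H' μ ((spec μ).mp hμ)⟩
  have hcond : ∀ t : ℝ, (h * (2 * t + 1) < 0 ∧ 0 < h ^ 2 * (t ^ 2 - 9 * t + 8)) ↔
      (t ∈ Set.Ioo (-(1:ℝ)/2) 1 ∪ Set.Ioi (8:ℝ)) := by
    intro t
    have hh2 : 0 < h ^ 2 := by nlinarith
    simp only [Set.mem_union, Set.mem_Ioo, Set.mem_Ioi]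
    constructor
    · rintro ⟨h1, h2⟩
      have ht : -(1:ℝ)/2 < t := by nlinarith
      have h2' : 0 < t ^ 2 - 9 * t + 8 := by nlinarith
      rcases lt_or_ge t 1 with h' | h'
      · exact Or.inl ⟨ht, h'⟩
      · right; nlinarith
    · rintro (⟨h1, h2⟩ | h1)
      · have hq : 0 < t ^ 2 - 9 * t + 8 := by nlinarith
        exact ⟨by nlinarith, mul_pos hh2 hq⟩
      · have hq : 0 < t ^ 2 - 9 * t + 8 := by nlinarith
        exact ⟨by nlinarith, mul_pos hh2 hq⟩
  refine ⟨?_, fun t => (key t).trans (hcond t), ?_⟩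
  · have := (key 0).mpr (by constructor <;> nlinarith [mul_pos_of_neg_of_neg hh hh])
    simpa using this
  · intro hS
    have := ((key 2).mp hS).2
    nlinarith [mul_pos_of_neg_of_neg hh hh]
end

section
/- If H is an n×n real matrix such that A + tH is stable for every stable A and every t ≥ 0, and n ≥ 2, then all eigenvalues of H are real and nonpositive. -/
open Matrix

/-- spectrum membership via determinant -/
lemma mem_spec_iff_det' {n : ℕ} (M : Matrix (Fin n) (Fin n) ℂ) (μ : ℂ) :
    μ ∈ spectrum ℂ M ↔ (algebraMap ℂ (Matrix (Fin n) (Fin n) ℂ) μ - M).det = 0 := by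
  rw [spectrum.mem_iff, Matrix.isUnit_iff_isUnit_det, isUnit_iff_ne_zero, not_not]

/-- spectrum of scalar plus square-zero matrix -/
lemma spec_sqzero' {n : ℕ} (N : Matrix (Fin n) (Fin n) ℂ) (hN : N * N = 0) (ν μ : ℂ)
    (h : μ ∈ spectrum ℂ (algebraMap ℂ (Matrix (Fin n) (Fin n) ℂ) ν + N)) : μ = ν := by
  by_contra hne
  rw [spectrum.mem_iff] at h
  apply h
  have hδ : μ - ν ≠ 0 := sub_ne_zero.mpr hne
  set δ := μ - ν with hδdef
  have key : algebraMap ℂ (Matrix (Fin n) (Fin n) ℂ) μ - (algebraMap ℂ _ ν + N)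
      = δ • 1 - N := by
    rw [Algebra.algebraMap_eq_smul_one, Algebra.algebraMap_eq_smul_one, hδdef, sub_smul]
    abel
  rw [key]
  have e1 : δ * (δ⁻¹ * δ⁻¹) = δ⁻¹ := by field_simp
  have e2 : δ⁻¹ * δ⁻¹ * δ = δ⁻¹ := by field_simp
  have hmul : (δ • 1 - N) * (δ⁻¹ • 1 + (δ⁻¹*δ⁻¹) • N) = 1 := by
    simp only [mul_add, sub_mul, smul_mul_smul_comm, Matrix.mul_smul, Matrix.smul_mul,
      one_mul, mul_one, hN, smul_zero, e1, mul_inv_cancel₀ hδ, one_smul]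
    abel
  have hmul' : (δ⁻¹ • 1 + (δ⁻¹*δ⁻¹) • N) * (δ • 1 - N) = 1 := by
    simp only [mul_sub, add_mul, smul_mul_smul_comm, Matrix.mul_smul, Matrix.smul_mul,
      one_mul, mul_one, hN, smul_zero, e2, inv_mul_cancel₀ hδ, one_smul]
    abel
  exact ⟨⟨_, _, hmul, hmul'⟩, rfl⟩

/-- real eigenvector real eigenvalue gives complex spectrum membership -/
lemma real_eig_mem_spec' {n : ℕ} (M : Matrix (Fin n) (Fin n) ℝ) (x : Fin n → ℝ)
    (hx : x ≠ 0) (μ : ℝ) (h : ∀ i, (M *ᵥ x) i = μ * x i) :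
    (μ : ℂ) ∈ spectrum ℂ (M.map (fun t => (t : ℂ))) := by
  rw [mem_spec_iff_det']
  apply Matrix.exists_mulVec_eq_zero_iff.mp
  refine ⟨fun i => (x i : ℂ), ?_, ?_⟩
  · intro hc
    apply hx
    funext i
    have h1 := congrFun hc i
    rw [Pi.zero_apply] at h1
    exact_mod_cast h1
  · funext i
    simp only [Matrix.sub_mulVec, Pi.sub_apply, Pi.zero_apply, sub_eq_zero]
    have h2 : ((algebraMap ℂ (Matrix (Fin n) (Fin n) ℂ) (μ:ℂ)) *ᵥ fun i => (x i : ℂ)) i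
        = (μ : ℂ) * (x i : ℂ) := by
      rw [Algebra.algebraMap_eq_smul_one, Matrix.smul_mulVec, Matrix.one_mulVec]
      simp
    rw [h2]
    have h3 : ((M.map (fun t => (t:ℂ))) *ᵥ fun i => (x i : ℂ)) i
        = (((M *ᵥ x) i : ℝ) : ℂ) := by
      simp only [Matrix.mulVec, dotProduct, Matrix.map_apply]
      push_cast
      rfl
    rw [h3, h i]
    push_cast
    ring

/-- eigenvalue decomposition into real equations -/
lemma eig_parts' {n : ℕ} (H : Matrix (Fin n) (Fin n) ℝ) (μ : ℂ)
    (hμ : μ ∈ spectrum ℂ (H.map (fun x => (x : ℂ)))) :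
    ∃ u v : Fin n → ℝ, (∃ i, u i ≠ 0 ∨ v i ≠ 0) ∧
      (∀ i, (H *ᵥ u) i = μ.re * u i - μ.im * v i) ∧
      (∀ i, (H *ᵥ v) i = μ.im * u i + μ.re * v i) := by
  rw [mem_spec_iff_det'] at hμ
  obtain ⟨w, hw0, hww⟩ := Matrix.exists_mulVec_eq_zero_iff.mpr hμ
  have key : ∀ i, ∑ j, (H i j : ℂ) * w j = μ * w i := by
    intro i
    have h1 := congrFun hww i
    simp only [Matrix.sub_mulVec, Pi.sub_apply, Pi.zero_apply, sub_eq_zero] at h1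
    have h2 : ((algebraMap ℂ (Matrix (Fin n) (Fin n) ℂ) μ) *ᵥ w) i = μ * w i := by
      rw [Algebra.algebraMap_eq_smul_one, Matrix.smul_mulVec, Matrix.one_mulVec]
      simp
    rw [← h2, h1]
    simp [Matrix.mulVec, dotProduct, Matrix.map_apply]
  refine ⟨fun i => (w i).re, fun i => (w i).im, ?_, ?_, ?_⟩
  · by_contra hc
    push_neg at hc
    apply hw0
    funext i
    exact Complex.ext (hc i).1 (hc i).2
  · intro i
    have h3 := congrArg Complex.re (key i)
    simp only [Complex.re_sum, Complex.mul_re, Complex.ofReal_re, Complex.ofReal_im,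
      zero_mul, sub_zero] at h3
    simpa [Matrix.mulVec, dotProduct] using h3
  · intro i
    have h3 := congrArg Complex.im (key i)
    simp only [Complex.im_sum, Complex.mul_im, Complex.ofReal_re, Complex.ofReal_im,
      zero_mul, add_zero] at h3
    have h4 : (H *ᵥ fun i => (w i).im) i = ∑ j, H i j * (w j).im := by
      simp [Matrix.mulVec, dotProduct]
    rw [h4, h3]
    ring

/-- If `A + tH` is stable for every stable `A` and every `t ≥ 0` and `n ≥ 2`, then all
eigenvalues of `H` are real and nonpositive. -/
theorem stmt7 {n : ℕ} (hn : 2 ≤ n) (H : Matrix (Fin n) (Fin n) ℝ)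
    (hdir : ∀ A : Matrix (Fin n) (Fin n) ℝ, IsStableMat A →
      ∀ t : ℝ, 0 ≤ t → IsStableMat (A + t • H)) :
    ∀ μ ∈ spectrum ℂ (H.map (fun x => (x : ℂ))), μ.im = 0 ∧ μ.re ≤ 0 := by
  -- stability of -1
  have hneg1 : IsStableMat (-1 : Matrix (Fin n) (Fin n) ℝ) := by
    intro ν hν
    have hmap : ((-1 : Matrix (Fin n) (Fin n) ℝ)).map (fun x => (x:ℂ)) = -1 := by
      ext i j
      simp [Matrix.map_apply, Matrix.neg_apply, Matrix.one_apply, apply_ite]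
    rw [hmap, mem_spec_iff_det'] at hν
    have heq : algebraMap ℂ (Matrix (Fin n) (Fin n) ℂ) ν - (-1)
        = (ν + 1) • (1 : Matrix (Fin n) (Fin n) ℂ) := by
      rw [Algebra.algebraMap_eq_smul_one, add_smul, one_smul]
      abel
    rw [heq, Matrix.det_smul, Matrix.det_one, mul_one, Fintype.card_fin] at hν
    have : ν = -1 := by
      have := pow_eq_zero_iff (by omega : n ≠ 0) |>.mp hν
      linear_combination this
    rw [this]
    norm_num
  intro μ hμ
  -- Part 1 : real part nonpositive
  have part1 : μ.re ≤ 0 := by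
    by_contra hre
    push_neg at hre
    set t : ℝ := 2 / μ.re with ht
    have ht0 : 0 ≤ t := le_of_lt (div_pos two_pos hre)
    have hst := hdir (-1) hneg1 t ht0
    have hmem : (-1 + (t:ℂ) * μ) ∈ spectrum ℂ
        (((-1 + t • H) : Matrix (Fin n) (Fin n) ℝ).map (fun x => (x:ℂ))) := by
      rw [mem_spec_iff_det'] at hμ ⊢
      have key : algebraMap ℂ (Matrix (Fin n) (Fin n) ℂ) (-1 + (t:ℂ)*μ)
          - ((-1 + t • H) : Matrix (Fin n) (Fin n) ℝ).map (fun x => (x:ℂ))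
          = (t:ℂ) • (algebraMap ℂ (Matrix (Fin n) (Fin n) ℂ) μ - H.map (fun x => (x:ℂ))) := by
        ext i j
        simp only [Matrix.sub_apply, Matrix.smul_apply, Matrix.map_apply, Matrix.add_apply,
          Matrix.neg_apply, Matrix.algebraMap_matrix_apply, Matrix.one_apply, smul_eq_mul]
        by_cases h : i = j <;> simp [h] <;> push_cast <;> ring
      rw [key, Matrix.det_smul, hμ, mul_zero]
    have := hst _ hmem
    have hre2 : ((-1 : ℂ) + (t:ℂ)*μ).re = -1 + t * μ.re := by
      simp [Complex.add_re, Complex.mul_re]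
    rw [hre2, ht] at this
    rw [div_mul_cancel₀ 2 (ne_of_gt hre)] at this
    linarith
  refine ⟨?_, part1⟩
  -- Part 2 : imaginary part zero
  by_contra him
  obtain ⟨u, v, ⟨iw, hiw⟩, hu, hv⟩ := eig_parts' H μ hμ
  set a : ℝ := μ.re with ha
  set b : ℝ := μ.im with hb
  -- normalize sign of b
  obtain ⟨b', v', hb', hu', hv', hvz⟩ :
      ∃ (b' : ℝ) (v' : Fin n → ℝ), 0 < b' ∧
        (∀ i, (H *ᵥ u) i = a * u i - b' * v' i) ∧
        (∀ i, (H *ᵥ v') i = b' * u i + a * v' i) ∧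
        ((∀ i, v' i = 0) → ∀ i, v i = 0) := by
    rcases lt_or_gt_of_ne him with hblt | hbgt
    · refine ⟨-b, fun i => -(v i), by linarith, ?_, ?_, ?_⟩
      · intro i; have := hu i; dsimp only; linarith [this]
      · intro i
        have h1 : (H *ᵥ fun i => -(v i)) i = -((H *ᵥ v) i) := by
          simp [Matrix.mulVec, dotProduct, ← Finset.sum_neg_distrib, mul_neg]
        rw [h1, hv i]; ring
      · intro h i; have := h i; dsimp only at this; linarith
    · exact ⟨b, v, hbgt, hu, hv, fun h i => h i⟩
  -- case split on linear dependence of u, v'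
  by_cases hD : ∀ i j, u i * v' j = u j * v' i
  · -- dependent case: contradiction with b' > 0
    by_cases hu0 : ∀ i, u i = 0
    · -- u = 0 forces v' = 0, then w = 0
      have hv'0 : ∀ i, v' i = 0 := by
        intro i
        have h1 := hu' i
        have h2 : (H *ᵥ u) i = 0 := by
          simp [Matrix.mulVec, dotProduct]
          exact Finset.sum_eq_zero fun j _ => by rw [hu0 j, mul_zero]
        rw [h2, hu0 i] at h1
        have : b' * v' i = 0 := by linarith
        rcases mul_eq_zero.mp this with h | h
        · exact absurd h (ne_of_gt hb')
        · exact h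
      have := hvz hv'0 iw
      rcases hiw with h | h
      · exact h (hu0 iw)
      · -- v iw ≠ 0 but we only know v' = 0 → v = 0
        exact h this
    · push_neg at hu0
      obtain ⟨i0, hi0⟩ := hu0
      obtain ⟨s, hs⟩ : ∃ s : ℝ, s = v' i0 / u i0 := ⟨_, rfl⟩
      have hveq : ∀ j, v' j = s * u j := by
        intro j
        have h := hD j i0
        rw [hs]
        field_simp
        linear_combination (-1 : ℝ) * h
      have key1 := hv' i0
      have key2 : (H *ᵥ v') i0 = s * ((H *ᵥ u) i0) := by
        have h1 : ∀ i, (H *ᵥ v') i = s * (H *ᵥ u) i := by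
          intro i
          simp only [Matrix.mulVec, dotProduct, Finset.mul_sum]
          exact Finset.sum_congr rfl fun j _ => by rw [hveq j]; ring
        exact h1 i0
      rw [key2, hu' i0, hveq i0] at key1
      have hfin : u i0 * (b' * (s^2 + 1)) = 0 := by linear_combination (-1 : ℝ) * key1
      rcases mul_eq_zero.mp hfin with h | h
      · exact hi0 h
      · rcases mul_eq_zero.mp h with h2 | h2
        · exact absurd h2 (ne_of_gt hb')
        · nlinarith [sq_nonneg s]
  · -- independent case: build destabilizing A
    push_neg at hD
    obtain ⟨i0, j0, hD0⟩ := hD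
    obtain ⟨D, hDdef⟩ : ∃ D : ℝ, D = u i0 * v' j0 - u j0 * v' i0 := ⟨_, rfl⟩
    have hDne : D ≠ 0 := by rw [hDdef]; exact sub_ne_zero.mpr hD0
    obtain ⟨φ, hφ⟩ : ∃ φ : Fin n → ℝ, φ = fun k =>
        (u i0 * (if k = j0 then 1 else 0) - u j0 * (if k = i0 then 1 else 0)) / D := ⟨_, rfl⟩
    have hij : j0 ≠ i0 := by rintro rfl; exact hD0 rfl
    have hdφ : ∀ x : Fin n → ℝ, ∑ k, φ k * x k = (u i0 * x j0 - u j0 * x i0) / D := by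
      intro x
      have expand : ∀ k, φ k * x k
          = (if k = j0 then u i0 / D * x k else 0) - (if k = i0 then u j0 / D * x k else 0) := by
        intro k
        simp only [hφ]
        rcases eq_or_ne k j0 with rfl | h1
        · rw [if_pos rfl, if_pos rfl, if_neg hij, if_neg hij]
          ring
        · rcases eq_or_ne k i0 with rfl | h2
          · rw [if_neg h1, if_pos rfl, if_neg h1, if_pos rfl]
            ring
          · rw [if_neg h1, if_neg h2, if_neg h1, if_neg h2]
            ring
      rw [Finset.sum_congr rfl fun k _ => expand k, Finset.sum_sub_distrib]
      simp only [Finset.sum_ite_eq', Finset.mem_univ, if_true]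
      ring
    have hφu : ∑ k, φ k * u k = 0 := by
      rw [hdφ u, mul_comm (u i0) (u j0), sub_self, zero_div]
    have hφv : ∑ k, φ k * v' k = 1 := by
      rw [hdφ v', ← hDdef, div_self hDne]
    -- constants
    obtain ⟨c, hc⟩ : ∃ c : ℝ, c = -(((1-a)^2 + b')/b' + b') := ⟨_, rfl⟩
    obtain ⟨q, hq⟩ : ∃ q : ℝ, q = c + b' := ⟨_, rfl⟩
    obtain ⟨s, hsdef⟩ : ∃ s : ℝ, s = Real.sqrt ((1-a)^2 + b') := ⟨_, rfl⟩
    have hs0 : 0 ≤ s := hsdef ▸ Real.sqrt_nonneg _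
    have hs2 : s * s = (1-a)^2 + b' := by
      rw [hsdef]; exact Real.mul_self_sqrt (by positivity)
    have hqb : q * (-b') = (1-a)^2 + b' := by
      rw [hq, hc]; field_simp; ring
    have hkey : s * s = q * (-b') := hs2.trans hqb.symm
    have hqneg : q < 0 := by
      have h1 : q = -(((1-a)^2 + b')/b') := by rw [hq, hc]; ring
      rw [h1]
      have : 0 < ((1-a)^2 + b')/b' := div_pos (by positivity) hb'
      linarith
    obtain ⟨μ', hμ'⟩ : ∃ x : ℝ, x = a - 1 + s := ⟨_, rfl⟩
    have hμ'0 : 0 ≤ μ' := by rw [hμ']; nlinarith [hs2, hb', hs0]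
    -- the matrix A
    obtain ⟨A, hA⟩ : ∃ A : Matrix (Fin n) (Fin n) ℝ,
        A = -1 + c • Matrix.vecMulVec u φ := ⟨_, rfl⟩
    -- A stable
    have hAstable : IsStableMat A := by
      intro ν hν
      set uC : Fin n → ℂ := fun i => (u i : ℂ) with huC
      set φC : Fin n → ℂ := fun i => (φ i : ℂ) with hφC
      have hmap : A.map (fun x => (x:ℂ)) =
          algebraMap ℂ (Matrix (Fin n) (Fin n) ℂ) (-1) + (c:ℂ) • Matrix.vecMulVec uC φC := by
        ext i j
        simp only [Matrix.map_apply, hA, Matrix.add_apply, Matrix.neg_apply, Matrix.one_apply,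
          Matrix.smul_apply, Matrix.vecMulVec_apply, Matrix.algebraMap_matrix_apply,
          smul_eq_mul, huC, hφC]
        by_cases h : i = j <;> simp [h] <;> push_cast <;> ring
      rw [hmap] at hν
      have hNN : ((c:ℂ) • Matrix.vecMulVec uC φC) * ((c:ℂ) • Matrix.vecMulVec uC φC) = 0 := by
        have hXX : Matrix.vecMulVec uC φC * Matrix.vecMulVec uC φC = 0 := by
          ext i j
          rw [Matrix.mul_apply]
          simp only [Matrix.vecMulVec_apply, Matrix.zero_apply]
          have : ∀ k, uC i * φC k * (uC k * φC j) = (uC i * φC j) * (φC k * uC k) := by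
            intro k; ring
          rw [Finset.sum_congr rfl fun k _ => this k, ← Finset.mul_sum]
          have : ∑ k, φC k * uC k = 0 := by
            have : ((∑ k, φ k * u k : ℝ) : ℂ) = 0 := by rw [hφu]; norm_num
            rw [← this]
            push_cast
            rfl
          rw [this, mul_zero]
        rw [Matrix.smul_mul, Matrix.mul_smul, hXX]
        simp
      have := spec_sqzero' _ hNN _ _ hν
      rw [this]
      norm_num
    -- apply hdir with t = 1
    have hst := hdir A hAstable 1 zero_le_one
    rw [one_smul] at hst
    -- the eigenvector
    obtain ⟨w', hw'⟩ : ∃ w' : Fin n → ℝ, w' = fun i => q * u i + s * v' i := ⟨_, rfl⟩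
    have hw'0 : w' ≠ 0 := by
      intro hc0
      have h1 : w' i0 = 0 := by rw [hc0]; rfl
      have h2 : w' j0 = 0 := by rw [hc0]; rfl
      rw [hw'] at h1 h2
      dsimp only at h1 h2
      have : q * D = v' j0 * (q * u i0 + s * v' i0) - v' i0 * (q * u j0 + s * v' j0) := by
        rw [hDdef]; ring
      rw [h1, h2] at this
      simp at this
      rcases this with h | h
      · exact absurd h (ne_of_lt hqneg)
      · exact hDne h
    -- eigenvalue equation
    have heig : ∀ i, ((A + H) *ᵥ w') i = μ' * w' i := by
      intro i
      have hAw : (A *ᵥ w') i = -(w' i) + c * (u i * ∑ k, φ k * w' k) := by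
        have hvm : (Matrix.vecMulVec u φ *ᵥ w') i = u i * ∑ k, φ k * w' k := by
          simp only [Matrix.mulVec, dotProduct, Matrix.vecMulVec_apply]
          rw [Finset.mul_sum]
          exact Finset.sum_congr rfl fun k _ => by ring
        rw [hA, Matrix.add_mulVec, Matrix.neg_mulVec, Matrix.one_mulVec,
          Matrix.smul_mulVec]
        simp only [Pi.add_apply, Pi.neg_apply, Pi.smul_apply, smul_eq_mul]
        rw [hvm]
      have hφw' : ∑ k, φ k * w' k = s := by
        have : ∀ k, φ k * w' k = q * (φ k * u k) + s * (φ k * v' k) := by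
          intro k; rw [hw']; dsimp only; ring
        rw [Finset.sum_congr rfl fun k _ => this k, Finset.sum_add_distrib,
          ← Finset.mul_sum, ← Finset.mul_sum, hφu, hφv]
        ring
      have hHw : (H *ᵥ w') i = q * ((H *ᵥ u) i) + s * ((H *ᵥ v') i) := by
        simp only [Matrix.mulVec, dotProduct, hw', Finset.mul_sum,
          ← Finset.sum_add_distrib]
        exact Finset.sum_congr rfl fun j _ => by ring
      rw [Matrix.add_mulVec, Pi.add_apply, hAw, hφw', hHw, hu' i, hv' i, hw']
      dsimp only
      rw [hμ']
      linear_combination (-(s * u i)) * hq + (-(v' i)) * hkey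
    have hmem := real_eig_mem_spec' (A + H) w' hw'0 μ' heig
    have := hst _ hmem
    rw [Complex.ofReal_re] at this
    linarith
end

section
/- A monic cubic polynomial x³ + ax² + bx + c with real coefficients has all roots with negative real part if and only if a > 0, c > 0, and ab > c. -/
/-- Routh–Hurwitz criterion for monic real cubics: all complex roots of
`x³ + ax² + bx + c` have negative real part iff `a > 0`, `c > 0` and `ab > c`. -/
theorem stmt8 (a b c : ℝ) :
    (∀ z : ℂ, z ^ 3 + (a : ℂ) * z ^ 2 + (b : ℂ) * z + (c : ℂ) = 0 → z.re < 0) ↔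
      0 < a ∧ 0 < c ∧ c < a * b := by
  constructor
  · intro h
    -- find a real root by IVT
    obtain ⟨r, hr⟩ : ∃ r : ℝ, r ^ 3 + a * r ^ 2 + b * r + c = 0 := by
      set M : ℝ := 1 + |a| + |b| + |c| with hM
      have hM1 : 1 ≤ M := by
        have := abs_nonneg a; have := abs_nonneg b; have := abs_nonneg c; linarith
      have hfM : 0 < M ^ 3 + a * M ^ 2 + b * M + c := by
        nlinarith [abs_nonneg a, abs_nonneg b, abs_nonneg c, neg_abs_le a, neg_abs_le b,
          neg_abs_le c, le_abs_self a, le_abs_self b, le_abs_self c, sq_nonneg M]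
      have hfm : (-M) ^ 3 + a * (-M) ^ 2 + b * (-M) + c < 0 := by
        nlinarith [abs_nonneg a, abs_nonneg b, abs_nonneg c, neg_abs_le a, neg_abs_le b,
          neg_abs_le c, le_abs_self a, le_abs_self b, le_abs_self c, sq_nonneg M]
      have hcont : ContinuousOn (fun x : ℝ => x ^ 3 + a * x ^ 2 + b * x + c)
          (Set.Icc (-M) M) := by fun_prop
      have hsub := intermediate_value_Icc (by linarith : (-M : ℝ) ≤ M) hcont
      have h0 : (0 : ℝ) ∈ Set.Icc ((-M) ^ 3 + a * (-M) ^ 2 + b * (-M) + c)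
          (M ^ 3 + a * M ^ 2 + b * M + c) := ⟨hfm.le, hfM.le⟩
      obtain ⟨r, _, hr⟩ := hsub h0
      exact ⟨r, hr⟩
    have hrC : (r : ℂ) ^ 3 + (a : ℂ) * (r : ℂ) ^ 2 + (b : ℂ) * r + (c : ℂ) = 0 := by
      have : ((r ^ 3 + a * r ^ 2 + b * r + c : ℝ) : ℂ) = 0 := by rw [hr]; simp
      push_cast at this
      linear_combination this
    have hrneg : r < 0 := by simpa using h r hrC
    set p : ℝ := a + r with hp
    set q : ℝ := b + p * r with hq
    have hc : c = -(r * q) := by rw [hq, hp]; linear_combination hr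
    have hquad : ∀ w : ℂ, w ^ 2 + (p : ℂ) * w + (q : ℂ) = 0 → w.re < 0 := by
      intro w hw
      apply h
      have e1 : (a : ℂ) - p + r = 0 := by push_cast [hp]; ring
      have e2 : (b : ℂ) - q + p * r = 0 := by push_cast [hq]; ring
      have e3 : (c : ℂ) + r * q = 0 := by push_cast [hc]; ring
      have hfac : w ^ 3 + (a : ℂ) * w ^ 2 + (b : ℂ) * w + (c : ℂ)
          = (w - r) * (w ^ 2 + (p : ℂ) * w + (q : ℂ)) := by
        linear_combination w ^ 2 * e1 + w * e2 + e3
      rw [hfac, hw, mul_zero]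
    have hppos : 0 < p ∧ 0 < q := by
      rcases le_or_gt (4 * q) (p ^ 2) with hd | hd
      · set s : ℝ := Real.sqrt (p ^ 2 - 4 * q) with hsdef
        have hs : s ^ 2 = p ^ 2 - 4 * q := Real.sq_sqrt (by linarith)
        have hs0 : 0 ≤ s := Real.sqrt_nonneg _
        have hw1r : ((-p + s) / 2) ^ 2 + p * ((-p + s) / 2) + q = 0 := by
          linear_combination hs / 4
        have hw2r : ((-p - s) / 2) ^ 2 + p * ((-p - s) / 2) + q = 0 := by
          linear_combination hs / 4
        have hw1 : ((-p + s) / 2 : ℝ) < 0 := by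
          have := hquad (((-p + s) / 2 : ℝ) : ℂ) (by exact_mod_cast hw1r)
          simpa using this
        have hw2 : ((-p - s) / 2 : ℝ) < 0 := by
          have := hquad (((-p - s) / 2 : ℝ) : ℂ) (by exact_mod_cast hw2r)
          simpa using this
        constructor
        · linarith
        · nlinarith
      · set s : ℝ := Real.sqrt (4 * q - p ^ 2) with hsdef
        have hs : s ^ 2 = 4 * q - p ^ 2 := Real.sq_sqrt (by linarith)
        have hsC : (s : ℂ) ^ 2 = 4 * (q : ℂ) - (p : ℂ) ^ 2 := by exact_mod_cast hs
        have hwroot : ((-(p : ℂ) + s * Complex.I) / 2) ^ 2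
            + (p : ℂ) * ((-(p : ℂ) + s * Complex.I) / 2) + (q : ℂ) = 0 := by
          linear_combination (Complex.I ^ 2 / 4) * hsC
            + ((4 * (q : ℂ) - (p : ℂ) ^ 2) / 4) * Complex.I_sq
        have := hquad _ hwroot
        have hre : ((-(p : ℂ) + s * Complex.I) / 2).re = -p / 2 := by simp
        rw [hre] at this
        constructor
        · linarith
        · nlinarith [sq_nonneg p]
    obtain ⟨hP, hQ⟩ := hppos
    have habc : a * b - c = p * q - p ^ 2 * r + p * r ^ 2 := by
      rw [hc, hq, hp]; ring
    refine ⟨by rw [hp] at hP; linarith, by nlinarith, ?_⟩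
    nlinarith [mul_pos hP hQ, mul_pos (mul_pos hP hP) (neg_pos.mpr hrneg),
      mul_nonneg hP.le (sq_nonneg r)]
  · rintro ⟨ha, hc, hab⟩ z hz
    have hb : 0 < b := by
      rcases le_or_gt b 0 with hb | hb
      · nlinarith
      · exact hb
    set x := z.re with hx
    set y := z.im with hy
    have hz1 : (z ^ 3 + (a : ℂ) * z ^ 2 + (b : ℂ) * z + (c : ℂ)).re = 0 := by rw [hz]; simp
    have hz2 : (z ^ 3 + (a : ℂ) * z ^ 2 + (b : ℂ) * z + (c : ℂ)).im = 0 := by rw [hz]; simp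
    simp only [Complex.add_re, Complex.add_im, Complex.mul_re, Complex.mul_im,
      Complex.ofReal_re, Complex.ofReal_im, pow_succ, pow_zero, one_mul] at hz1 hz2
    have h1 : x ^ 3 - 3 * x * y ^ 2 + a * x ^ 2 - a * y ^ 2 + b * x + c = 0 := by
      linear_combination hz1
    have h2 : y * (3 * x ^ 2 - y ^ 2 + 2 * a * x + b) = 0 := by linear_combination hz2
    by_contra hxn
    push_neg at hxn
    rcases mul_eq_zero.mp h2 with hy0 | hE
    · rw [hy0] at h1
      nlinarith [mul_nonneg (mul_nonneg hxn hxn) hxn, mul_nonneg ha.le (mul_nonneg hxn hxn),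
        mul_nonneg hb.le hxn]
    · have key : 8 * x ^ 3 + 8 * a * x ^ 2 + 2 * a ^ 2 * x + 2 * b * x + a * b - c = 0 := by
        linear_combination -h1 + (3 * x + a) * hE
      nlinarith [mul_nonneg (mul_nonneg hxn hxn) hxn, mul_nonneg ha.le (mul_nonneg hxn hxn),
        mul_nonneg hb.le hxn, mul_nonneg (mul_nonneg ha.le ha.le) hxn]
end

section
/- If L is an n×n real symmetric positive definite matrix, M is a nonzero n×n real matrix, D₀ is symmetric positive definite, and L Mᵀ + M L + D₀ = 0, then the minimum eigenvalue of L satisfies λ_min(L) ≥ λ_min(D₀) / (2‖M‖), where ‖M‖ denotes the operator norm. -/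
open scoped Matrix Matrix.Norms.L2Operator

open Matrix in
lemma rayleigh_aux' {n : ℕ} [Nonempty (Fin n)] {A : Matrix (Fin n) (Fin n) ℝ}
    (hA : A.IsHermitian) (v : EuclideanSpace ℝ (Fin n)) (hv : ‖v‖ = 1) :
    sInf (spectrum ℝ A) ≤ ⇑v ⬝ᵥ (A *ᵥ ⇑v) := by
  classical
  set b := hA.eigenvectorBasis with hb
  set μ := hA.eigenvalues with hμ
  have hAt : Aᵀ = A := by
    have := hA.eq
    simpa [Matrix.conjTranspose_eq_transpose_of_trivial] using this
  have hinner : ∀ (x y : EuclideanSpace ℝ (Fin n)), (inner ℝ x y : ℝ) = ⇑x ⬝ᵥ ⇑y := by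
    intro x y
    simp [PiLp.inner_apply, dotProduct, RCLike.inner_apply, conj_trivial, mul_comm]
  have key : ⇑v ⬝ᵥ (A *ᵥ ⇑v) = ∑ i, μ i * (inner ℝ (b i) v : ℝ) ^ 2 := by
    have h1 : (inner ℝ v ((EuclideanSpace.equiv (Fin n) ℝ).symm (A *ᵥ ⇑v)) : ℝ)
        = ∑ i, (inner ℝ v (b i) : ℝ) * (inner ℝ (b i) ((EuclideanSpace.equiv (Fin n) ℝ).symm (A *ᵥ ⇑v)) : ℝ) :=
      (b.sum_inner_mul_inner _ _).symm
    have h2 : ∀ i, (inner ℝ (b i) ((EuclideanSpace.equiv (Fin n) ℝ).symm (A *ᵥ ⇑v)) : ℝ)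
        = μ i * (inner ℝ (b i) v : ℝ) := by
      intro i
      rw [hinner, hinner]
      show ⇑(b i) ⬝ᵥ (A *ᵥ ⇑v) = μ i * (⇑(b i) ⬝ᵥ ⇑v)
      have h4 : ⇑(b i) ⬝ᵥ (A *ᵥ ⇑v) = (A *ᵥ ⇑(b i)) ⬝ᵥ ⇑v := by
        rw [Matrix.dotProduct_mulVec, ← Matrix.mulVec_transpose, hAt]
      rw [h4, hA.mulVec_eigenvectorBasis, smul_dotProduct]
      simp [smul_eq_mul]
      rfl
    have h3 : (inner ℝ v ((EuclideanSpace.equiv (Fin n) ℝ).symm (A *ᵥ ⇑v)) : ℝ) = ⇑v ⬝ᵥ (A *ᵥ ⇑v) := by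
      rw [hinner]; rfl
    rw [← h3, h1]
    refine Finset.sum_congr rfl fun i _ => ?_
    rw [h2 i, real_inner_comm v (b i)]
    ring
  have parseval : ∑ i, (inner ℝ (b i) v : ℝ) ^ 2 = 1 := by
    have h1 : (inner ℝ v v : ℝ) = ∑ i, (inner ℝ v (b i) : ℝ) * (inner ℝ (b i) v : ℝ) :=
      (b.sum_inner_mul_inner _ _).symm
    have h2 : (inner ℝ v v : ℝ) = 1 := by
      rw [real_inner_self_eq_norm_sq, hv]; norm_num
    rw [← h2, h1]
    refine Finset.sum_congr rfl fun i _ => ?_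
    rw [real_inner_comm v (b i)]; ring
  have hle : ∀ i, sInf (spectrum ℝ A) ≤ μ i := by
    intro i
    rw [hA.spectrum_real_eq_range_eigenvalues]
    exact csInf_le (Set.Finite.bddBelow (Set.finite_range _)) (Set.mem_range_self i)
  calc sInf (spectrum ℝ A) = sInf (spectrum ℝ A) * ∑ i, (inner ℝ (b i) v : ℝ) ^ 2 := by
        rw [parseval, mul_one]
    _ = ∑ i, sInf (spectrum ℝ A) * (inner ℝ (b i) v : ℝ) ^ 2 := Finset.mul_sum _ _ _
    _ ≤ ∑ i, μ i * (inner ℝ (b i) v : ℝ) ^ 2 := by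
        refine Finset.sum_le_sum fun i _ => ?_
        exact mul_le_mul_of_nonneg_right (hle i) (sq_nonneg _)
    _ = ⇑v ⬝ᵥ (A *ᵥ ⇑v) := key.symm

/-- If `L` is symmetric positive definite, `D₀` symmetric positive definite, `M ≠ 0`, and
`L Mᵀ + M L + D₀ = 0`, then `λ_min(L) ≥ λ_min(D₀) / (2‖M‖)` where `‖M‖` is the operator
norm and the minimum eigenvalues are expressed as infima of the real spectra. -/
theorem stmt12 {n : ℕ} (hn : 0 < n)
    (L M D₀ : Matrix (Fin n) (Fin n) ℝ)
    (hL : L.PosDef) (hD : D₀.PosDef) (hM : M ≠ 0)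
    (hlyap : L * Mᵀ + M * L + D₀ = 0) :
    sInf (spectrum ℝ D₀) / (2 * ‖M‖) ≤ sInf (spectrum ℝ L) := by
  classical
  have hne : Nonempty (Fin n) := ⟨⟨0, hn⟩⟩
  have hLh := hL.isHermitian
  have hspec : spectrum ℝ L = Set.range hLh.eigenvalues := hLh.spectrum_real_eq_range_eigenvalues
  have hmem : sInf (spectrum ℝ L) ∈ spectrum ℝ L := by
    rw [hspec]
    exact (Set.range_nonempty _).csInf_mem (Set.finite_range _)
  rw [hspec] at hmem
  obtain ⟨i₀, hi₀⟩ := hmem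
  rw [← hspec] at hi₀
  set lam := sInf (spectrum ℝ L) with hlam
  have hlam_pos : 0 < lam := by rw [← hi₀]; exact hL.eigenvalues_pos i₀
  set v : EuclideanSpace ℝ (Fin n) := hLh.eigenvectorBasis i₀ with hv
  have hvnorm : ‖v‖ = 1 := hLh.eigenvectorBasis.orthonormal.1 i₀
  have hvL : L *ᵥ ⇑v = lam • ⇑v := by
    rw [← hi₀]; exact hLh.mulVec_eigenvectorBasis i₀
  have hLt : Lᵀ = L := by simpa [Matrix.conjTranspose_eq_transpose_of_trivial] using hLh.eq
  have hD0eq : D₀ = -(L * Mᵀ + M * L) := eq_neg_of_add_eq_zero_right hlyap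
  set s : ℝ := ⇑v ⬝ᵥ (M *ᵥ ⇑v) with hsdef
  have hMTv : ⇑v ⬝ᵥ (Mᵀ *ᵥ ⇑v) = s := by
    rw [Matrix.dotProduct_mulVec, ← Matrix.mulVec_transpose, Matrix.transpose_transpose,
      dotProduct_comm]
  have e1 : ⇑v ⬝ᵥ ((L * Mᵀ) *ᵥ ⇑v) = lam * s := by
    rw [← Matrix.mulVec_mulVec, Matrix.dotProduct_mulVec (⇑v) L, ← Matrix.mulVec_transpose,
      hLt, hvL, smul_dotProduct, hMTv, smul_eq_mul]
  have e2 : ⇑v ⬝ᵥ ((M * L) *ᵥ ⇑v) = lam * s := by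
    rw [← Matrix.mulVec_mulVec, hvL, Matrix.mulVec_smul, dotProduct_smul, smul_eq_mul,
      hsdef]
  have hdot : ⇑v ⬝ᵥ (D₀ *ᵥ ⇑v) = -(2 * lam * s) := by
    rw [hD0eq, Matrix.neg_mulVec, Matrix.add_mulVec, dotProduct_neg,
      dotProduct_add, e1, e2]
    ring
  have h1 : sInf (spectrum ℝ D₀) ≤ ⇑v ⬝ᵥ (D₀ *ᵥ ⇑v) := rayleigh_aux' hD.isHermitian v hvnorm
  have hsb : |s| ≤ ‖M‖ := by
    set w : EuclideanSpace ℝ (Fin n) := (EuclideanSpace.equiv (Fin n) ℝ).symm (M *ᵥ ⇑v) with hw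
    have h2 : s = (inner ℝ v w : ℝ) := by
      simp only [PiLp.inner_apply, RCLike.inner_apply, conj_trivial]
      exact Finset.sum_congr rfl fun i _ => mul_comm _ _
    have h3 : ‖w‖ ≤ ‖M‖ := by
      have := M.l2_opNorm_mulVec v
      rwa [hvnorm, mul_one] at this
    calc |s| = |(inner ℝ v w : ℝ)| := by rw [h2]
      _ ≤ ‖v‖ * ‖w‖ := abs_real_inner_le_norm v w
      _ = ‖w‖ := by rw [hvnorm, one_mul]
      _ ≤ ‖M‖ := h3
  have hMpos : (0:ℝ) < ‖M‖ := by
    simpa using norm_pos_iff.mpr hM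
  rw [div_le_iff₀ (by positivity)]
  have hfin : sInf (spectrum ℝ D₀) ≤ -(2 * lam * s) := hdot ▸ h1
  nlinarith [(abs_le.mp hsb).1, hlam_pos]
end
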